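/- If ⊢0 P in the sequentiality type system (P is inactive), then P is not divergent; that is, there exists no infinite sequence of processes P1, P2, … with P ⟶ P1 ⟶ P2 ⟶ ⋯. -/
import Mathlib


/- Formalization of the asynchronous π-calculus (Aπ), its early labelled
   transition system, the sequentiality and well-bracketing type systems,
   and the associated behavioural equivalences, following
   Hirschkoff, Prebet, Sangiorgi, "On sequentiality and well-bracketing
   in the π-calculus". -/

namespace PiCalc

/-- Names are natural numbers. -/
abbrev Name := ℕ

/-- The three kinds of names: output-controlled, input-controlled,
    and continuation names. -/
inductive Kind : Type
  | oc | ic | cn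
deriving DecidableEq

/-- A fixed partition of names into the three kinds. -/
def kind (a : Name) : Kind :=
  if a % 3 = 0 then .oc else if a % 3 = 1 then .ic else .cn

def isOC (a : Name) : Bool := kind a == Kind.oc
def isIC (a : Name) : Bool := kind a == Kind.ic
def isCN (a : Name) : Bool := kind a == Kind.cn
/-- Output-controlled for the purposes of the sequentiality type system
    (continuation names are treated as output-controlled). -/
def isOCt (a : Name) : Bool := isOC a || isCN a
/-- Plain (non-continuation) names. -/
def isPL (a : Name) : Bool := isOC a || isIC a
def noCN (as : List Name) : Prop := ∀ a ∈ as, isPL a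

/- Syntax of Aπ: processes and guards. -/
mutual
inductive Proc : Type
  | out : Name → List Name → Proc            -- ā⟨b̃⟩
  | rep : Name → List Name → Proc → Proc     -- !a(b̃).P
  | par : Proc → Proc → Proc                 -- P | Q
  | res : Name → Proc → Proc                 -- (νa)P
  | guard : Guard → Proc
inductive Guard : Type
  | nil : Guard                              -- 0
  | inp : Name → List Name → Proc → Guard    -- a(b̃).P
  | tau : Proc → Guard                       -- τ.P
  | mat : Name → Name → Guard → Guard        -- [a=b]G
  | sum : Guard → Guard → Guard              -- G + G'
end

/- Free names. -/
mutual
def Proc.fn : Proc → Finset Name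
  | .out a bs => insert a bs.toFinset
  | .rep a bs P => insert a (Proc.fn P \ bs.toFinset)
  | .par P Q => Proc.fn P ∪ Proc.fn Q
  | .res a P => (Proc.fn P).erase a
  | .guard G => Guard.fn G
def Guard.fn : Guard → Finset Name
  | .nil => ∅
  | .inp a bs P => insert a (Proc.fn P \ bs.toFinset)
  | .tau P => Proc.fn P
  | .mat a b G => insert a (insert b (Guard.fn G))
  | .sum G1 G2 => Guard.fn G1 ∪ Guard.fn G2
end

/- All names occurring in a process (free or bound). -/
mutual
def Proc.an : Proc → Finset Name
  | .out a bs => insert a bs.toFinset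
  | .rep a bs P => insert a (bs.toFinset ∪ Proc.an P)
  | .par P Q => Proc.an P ∪ Proc.an Q
  | .res a P => insert a (Proc.an P)
  | .guard G => Guard.an G
def Guard.an : Guard → Finset Name
  | .nil => ∅
  | .inp a bs P => insert a (bs.toFinset ∪ Proc.an P)
  | .tau P => Proc.an P
  | .mat a b G => insert a (insert b (Guard.an G))
  | .sum G1 G2 => Guard.an G1 ∪ Guard.an G2
end

/-- Substitution (a renaming applied to free names). -/
def upd (f : Name → Name) (a : Name) : Name → Name :=
  fun b => if b = a then b else f b
def upds (f : Name → Name) (as : List Name) : Name → Name :=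
  fun b => if b ∈ as then b else f b

mutual
def Proc.subst : Proc → (Name → Name) → Proc
  | .out a bs, f => .out (f a) (bs.map f)
  | .rep a bs P, f => .rep (f a) bs (Proc.subst P (upds f bs))
  | .par P Q, f => .par (Proc.subst P f) (Proc.subst Q f)
  | .res a P, f => .res a (Proc.subst P (upd f a))
  | .guard G, f => .guard (Guard.subst G f)
def Guard.subst : Guard → (Name → Name) → Guard
  | .nil, _ => .nil
  | .inp a bs P, f => .inp (f a) bs (Proc.subst P (upds f bs))
  | .tau P, f => .tau (Proc.subst P f)
  | .mat a b G, f => .mat (f a) (f b) (Guard.subst G f)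
  | .sum G1 G2, f => .sum (Guard.subst G1 f) (Guard.subst G2 f)
end

/-- The substitution mapping the parameters x̃ to the received names b̃. -/
def mkSubst : List Name → List Name → Name → Name
  | x :: xs, b :: bs => fun a => if a = x then b else mkSubst xs bs a
  | _, _ => fun a => a

/-- Iterated restriction (νã)P. -/
def resMany (as : List Name) (P : Proc) : Proc := as.foldr Proc.res P

/-- Actions: τ, free input a⟨b̃⟩, bound output (νc̃)ā⟨b̃⟩. -/
inductive Act : Type
  | tau : Act
  | inp : Name → List Name → Act
  | out : Name → List Name → List Name → Act   -- out a cs bs = (νcs)ā⟨bs⟩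
deriving DecidableEq

def Act.bn : Act → List Name
  | .tau => []
  | .inp _ _ => []
  | .out _ cs _ => cs

def Act.names : Act → List Name
  | .tau => []
  | .inp a bs => a :: bs
  | .out a cs bs => a :: (cs ++ bs)

def Act.fn : Act → Finset Name
  | .tau => ∅
  | .inp a bs => insert a bs.toFinset
  | .out a cs bs => insert a (bs.toFinset \ cs.toFinset)

def Act.subj : Act → Option Name
  | .tau => none
  | .inp a _ => some a
  | .out a _ _ => some a

def Act.objs : Act → List Name
  | .tau => []
  | .inp _ bs => bs
  | .out _ _ bs => bs

/-- The early labelled transition system.  The boolean flag records whether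
    the derivation of the transition uses a communication (rule AComm);
    a τ-transition with flag `true` is an *interaction*. -/
inductive Trans : Proc → Act → Bool → Proc → Prop
  | out (a : Name) (bs : List Name) :
      Trans (.out a bs) (.out a [] bs) false (.guard .nil)
  | inp (a : Name) (xs bs : List Name) (P : Proc) (h : bs.length = xs.length) :
      Trans (.guard (.inp a xs P)) (.inp a bs) false (Proc.subst P (mkSubst xs bs))
  | rep (a : Name) (xs bs : List Name) (P : Proc) (h : bs.length = xs.length) :
      Trans (.rep a xs P) (.inp a bs) false
        (.par (.rep a xs P) (Proc.subst P (mkSubst xs bs)))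
  | tauPre (P : Proc) : Trans (.guard (.tau P)) .tau false P
  | sumL (G1 G2 : Guard) (μ : Act) (f : Bool) (P' : Proc) :
      Trans (.guard G1) μ f P' → Trans (.guard (.sum G1 G2)) μ f P'
  | sumR (G1 G2 : Guard) (μ : Act) (f : Bool) (P' : Proc) :
      Trans (.guard G2) μ f P' → Trans (.guard (.sum G1 G2)) μ f P'
  | mat (a : Name) (G : Guard) (μ : Act) (f : Bool) (P' : Proc) :
      Trans (.guard G) μ f P' → Trans (.guard (.mat a a G)) μ f P'
  | parL (P Q P' : Proc) (μ : Act) (f : Bool) :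
      Trans P μ f P' → (∀ c ∈ Act.bn μ, c ∉ Proc.fn Q) →
      Trans (.par P Q) μ f (.par P' Q)
  | parR (P Q Q' : Proc) (μ : Act) (f : Bool) :
      Trans Q μ f Q' → (∀ c ∈ Act.bn μ, c ∉ Proc.fn P) →
      Trans (.par P Q) μ f (.par P Q')
  | commL (P Q P' Q' : Proc) (a : Name) (cs bs : List Name) (f1 f2 : Bool) :
      Trans P (.out a cs bs) f1 P' → Trans Q (.inp a bs) f2 Q' →
      (∀ c ∈ cs, c ∉ Proc.fn Q) →
      Trans (.par P Q) .tau true (resMany cs (.par P' Q'))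
  | commR (P Q P' Q' : Proc) (a : Name) (cs bs : List Name) (f1 f2 : Bool) :
      Trans P (.inp a bs) f1 P' → Trans Q (.out a cs bs) f2 Q' →
      (∀ c ∈ cs, c ∉ Proc.fn P) →
      Trans (.par P Q) .tau true (resMany cs (.par P' Q'))
  | resI (a : Name) (P P' : Proc) (μ : Act) (f : Bool) :
      Trans P μ f P' → a ∉ Act.names μ → Trans (.res a P) μ f (.res a P')
  | openO (a x : Name) (cs bs : List Name) (P P' : Proc) (f : Bool) :
      Trans P (.out x cs bs) f P' → a ≠ x → a ∈ bs → a ∉ cs →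
      Trans (.res a P) (.out x (a :: cs) bs) f P'

/-- Reductions: τ-transitions. -/
def Step (P P' : Proc) : Prop := ∃ f, Trans P .tau f P'

/-- Interactions: τ-transitions derived from a communication. -/
def Interaction (P P' : Proc) : Prop := Trans P .tau true P'

/-- Weak reduction P ⟹ P'. -/
def WeakTau : Proc → Proc → Prop := Relation.ReflTransGen Step

/-- Weak transition P ⟹ --μ--> ⟹ P'. -/
def Weak (μ : Act) (P P' : Proc) : Prop :=
  ∃ P1 P2, WeakTau P P1 ∧ (∃ f, Trans P1 μ f P2) ∧ WeakTau P2 P'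

/-- Weak hat-transition: for τ this is just ⟹. -/
def WeakHat (μ : Act) (P P' : Proc) : Prop :=
  match μ with
  | .tau => WeakTau P P'
  | _ => Weak μ P P'

/-- Reachability through (strong) transitions. -/
def Reach : Proc → Proc → Prop :=
  Relation.ReflTransGen (fun P P' => ∃ μ f, Trans P μ f P')

/-- Image-finiteness. -/
def ImageFinite (P : Proc) : Prop :=
  ∀ P0, Reach P P0 → ∀ μ, {P' | Weak μ P0 P'}.Finite

/- One-hole contexts. -/
mutual
inductive Ctx : Type
  | hole : Ctx
  | repC : Name → List Name → Ctx → Ctx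
  | parL : Ctx → Proc → Ctx
  | parR : Proc → Ctx → Ctx
  | resC : Name → Ctx → Ctx
  | guardC : GCtx → Ctx
inductive GCtx : Type
  | inpC : Name → List Name → Ctx → GCtx
  | tauC : Ctx → GCtx
  | matC : Name → Name → GCtx → GCtx
  | sumL : GCtx → Guard → GCtx
  | sumR : Guard → GCtx → GCtx
end

mutual
def Ctx.fill : Ctx → Proc → Proc
  | .hole, P => P
  | .repC a bs C, P => .rep a bs (Ctx.fill C P)
  | .parL C Q, P => .par (Ctx.fill C P) Q
  | .parR Q C, P => .par Q (Ctx.fill C P)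
  | .resC a C, P => .res a (Ctx.fill C P)
  | .guardC Gc, P => .guard (GCtx.fill Gc P)
def GCtx.fill : GCtx → Proc → Guard
  | .inpC a bs C, P => .inp a bs (Ctx.fill C P)
  | .tauC C, P => .tau (Ctx.fill C P)
  | .matC a b Gc, P => .mat a b (GCtx.fill Gc P)
  | .sumL Gc G, P => .sum (GCtx.fill Gc P) G
  | .sumR G Gc, P => .sum G (GCtx.fill Gc P)
end

/-- Structural congruence ≡ (standard axioms, closed under all contexts). -/
inductive SCong : Proc → Proc → Prop
  | refl (P : Proc) : SCong P P
  | symm {P Q : Proc} : SCong P Q → SCong Q P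
  | trans {P Q R : Proc} : SCong P Q → SCong Q R → SCong P R
  | parComm (P Q : Proc) : SCong (.par P Q) (.par Q P)
  | parAssoc (P Q R : Proc) : SCong (.par (.par P Q) R) (.par P (.par Q R))
  | parNil (P : Proc) : SCong (.par P (.guard .nil)) P
  | resSwap (a b : Name) (P : Proc) : SCong (.res a (.res b P)) (.res b (.res a P))
  | resNil (a : Name) : SCong (.res a (.guard .nil)) (.guard .nil)
  | scopeExt (a : Name) (P Q : Proc) (h : a ∉ Proc.fn Q) :
      SCong (.par (.res a P) Q) (.res a (.par P Q))
  | ctx (C : Ctx) {P Q : Proc} : SCong P Q → SCong (Ctx.fill C P) (Ctx.fill C Q)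

/-! ### The sequentiality type system -/

/-- ⊢η P for η ∈ {0,1}: η = 1 means P is active (owns the thread). -/
inductive SeqTyped : ℕ → Proc → Prop
  | inpIC {u : Name} {as : List Name} {P : Proc} :
      isIC u → SeqTyped 1 P → SeqTyped 1 (.guard (.inp u as P))
  | inpOC {x : Name} {as : List Name} {P : Proc} :
      isOCt x → SeqTyped 1 P → SeqTyped 0 (.guard (.inp x as P))
  | repOC {x : Name} {as : List Name} {P : Proc} :
      isOCt x → SeqTyped 1 P → SeqTyped 0 (.rep x as P)
  | outOC {x : Name} {as : List Name} :
      isOCt x → SeqTyped 1 (.out x as)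
  | outIC {u : Name} {as : List Name} :
      isIC u → SeqTyped 0 (.out u as)
  | res {η : ℕ} {a : Name} {P : Proc} :
      SeqTyped η P → SeqTyped η (.res a P)
  | nil : SeqTyped 0 (.guard .nil)
  | par {η1 η2 : ℕ} {P Q : Proc} :
      SeqTyped η1 P → SeqTyped η2 Q → η1 + η2 ≤ 1 →
      SeqTyped (η1 + η2) (.par P Q)
  | sum {η : ℕ} {G1 G2 : Guard} :
      SeqTyped η (.guard G1) → SeqTyped η (.guard G2) →
      SeqTyped η (.guard (.sum G1 G2))
  | tauT {η : ℕ} {P : Proc} : SeqTyped η P → SeqTyped η (.guard (.tau P))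
  | mat {a b : Name} {G : Guard} :
      SeqTyped 0 (.guard G) → SeqTyped 0 (.guard (.mat a b G))

def InpAtIC (μ : Act) : Prop := ∃ u bs, μ = .inp u bs ∧ isIC u
def InpAtOC (μ : Act) : Prop := ∃ x bs, μ = .inp x bs ∧ isOCt x
def OutAtOC (μ : Act) : Prop := ∃ x cs bs, μ = .out x cs bs ∧ isOCt x

/-- Type-allowed transitions (η;P) --μ--> P'. -/
def TAT (η : ℕ) (P : Proc) (μ : Act) (P' : Proc) : Prop :=
  SeqTyped η P ∧ (∃ f, Trans P μ f P') ∧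
  (η = 0 ∨ μ = .tau ∨ (η = 1 ∧ (InpAtIC μ ∨ OutAtOC μ)))

def nextEta (η : ℕ) (μ : Act) : ℕ :=
  match μ with
  | .tau => η
  | .inp x _ => if isOCt x then 1 else η
  | .out x _ _ => if isOCt x then 0 else η

/-- Typed transitions (η,P) --μ--> (η',P'). -/
def TTrans (η : ℕ) (P : Proc) (μ : Act) (η' : ℕ) (P' : Proc) : Prop :=
  TAT η P μ P' ∧ η' = nextEta η μ

/-- Observability: the typed weak barb (η;P)⇓a. -/
def Barb (η : ℕ) (P : Proc) (a : Name) : Prop :=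
  ∃ P0 cs bs P1, WeakTau P P0 ∧ TAT η P0 (.out a cs bs) P1

/-! ### Ordinary (early asynchronous weak) bisimilarity -/

def IsBisim (R : Proc → Proc → Prop) : Prop :=
  (∀ P Q, R P Q → R Q P) ∧
  (∀ P Q, R P Q → ∀ μ f P', Trans P μ f P' →
    (∃ Q', WeakHat μ Q Q' ∧ R P' Q') ∨
    (∃ a bs, μ = .inp a bs ∧ ∃ Q', WeakTau (Proc.par Q (.out a bs)) Q' ∧ R P' Q'))

/-- Ordinary bisimilarity P ≈ Q. -/
def Bisim (P Q : Proc) : Prop := ∃ R, IsBisim R ∧ R P Q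

/-! ### Sequential bisimilarity -/

def IsSeqBisim (R : ℕ → Proc → Proc → Prop) : Prop :=
  (∀ η P Q, R η P Q → SeqTyped η P ∧ SeqTyped η Q) ∧
  (∀ η P Q, R η P Q → R η Q P) ∧
  (∀ η P Q, R η P Q → ∀ μ η' P', TTrans η P μ η' P' →
    (∃ Q', WeakHat μ Q Q' ∧ R η' P' Q') ∨
    (∃ a bs, μ = .inp a bs ∧ ∃ Q', WeakTau (Proc.par Q (.out a bs)) Q' ∧ R η' P' Q'))

/-- Sequential bisimilarity at η: P ≈η Q. -/
def SeqBisim (η : ℕ) (P Q : Proc) : Prop := ∃ R, IsSeqBisim R ∧ R η P Q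

/-! ### Barbed bisimulation and barbed equivalence (sequentiality) -/

def IsBarbedBisim (η : ℕ) (R : Proc → Proc → Prop) : Prop :=
  (∀ P Q, R P Q → R Q P) ∧
  (∀ P Q, R P Q → SeqTyped η P ∧ SeqTyped η Q) ∧
  (∀ P Q, R P Q → ∀ P', Step P P' → ∃ Q', WeakTau Q Q' ∧ R P' Q') ∧
  (∀ P Q, R P Q → ∀ a, Barb η P a → Barb η Q a)

/-- Barbed η-bisimilarity. -/
def BarbedBisim (η : ℕ) (P Q : Proc) : Prop := ∃ R, IsBarbedBisim η R ∧ R P Q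

/-- Barbed equivalence at η: testing with all (η'/η) static contexts
    (νã)(R | [·]). -/
def SeqBarbedEq (η : ℕ) (P Q : Proc) : Prop :=
  SeqTyped η P ∧ SeqTyped η Q ∧
  ∀ (η' ηR : ℕ) (as : List Name) (R : Proc),
    SeqTyped ηR R → ηR + η ≤ 1 → η' = ηR + η →
    BarbedBisim η' (resMany as (.par R P)) (resMany as (.par R Q))

/-! ### Stacks and the well-bracketing type system -/

inductive Tag : Type
  | O | I
deriving DecidableEq

abbrev Stack := List (Name × Tag)

/-- Alternation of tags. -/
def alternates : Stack → Prop
  | [] => True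
  | [_] => True
  | (_, t1) :: (q, t2) :: rest => t1 ≠ t2 ∧ alternates ((q, t2) :: rest)

def endsO (σ : Stack) : Prop := ∀ l, σ.getLast? = some l → l.2 = Tag.O

def bothAdj (σ : Stack) : Prop :=
  ∀ p, (p, Tag.O) ∈ σ → (p, Tag.I) ∈ σ →
    ∃ l1 l2, σ = l1 ++ (p, Tag.O) :: (p, Tag.I) :: l2

/-- σ is a well-formed stack. -/
def WFStack (σ : Stack) : Prop :=
  alternates σ ∧ endsO σ ∧ σ.Nodup ∧ bothAdj σ

/-- A stack is clean if no name occurs with both tags. -/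
def CleanS (σ : Stack) : Prop :=
  ∀ p, ¬((p, Tag.O) ∈ σ ∧ (p, Tag.I) ∈ σ)

/-- Order-preserving interleaving of stacks (the result must be a stack). -/
inductive InterAux : Stack → Stack → Stack → Prop
  | nil : InterAux [] [] []
  | right {σ1 σ2 σ3 : Stack} (p : Name) (t : Tag) :
      InterAux σ1 σ2 σ3 → InterAux ((p, t) :: σ1) σ2 ((p, t) :: σ3)
  | left {σ1 σ2 σ3 : Stack} (p : Name) (t : Tag) :
      InterAux σ1 σ2 σ3 → InterAux ((p, t) :: σ1) ((p, t) :: σ2) σ3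

def Interleave (σ σ1 σ2 : Stack) : Prop := WFStack σ ∧ InterAux σ σ1 σ2

/-- The well-bracketing type system ⊢σ P. -/
inductive Typr : Stack → Proc → Prop
  | out1 {p : Name} {as : List Name} :
      isCN p → noCN as → Typr [(p, Tag.O)] (.out p as)
  | out2 {x p : Name} {as : List Name} :
      isOC x → isCN p → noCN as → Typr [(p, Tag.O)] (.out x (as ++ [p]))
  | out3 {u : Name} {as : List Name} :
      isIC u → noCN as → Typr [] (.out u as)
  | inp1 {q p : Name} {as : List Name} {P : Proc} :
      isCN q → isCN p → p ≠ q → noCN as → Typr [(p, Tag.O)] P →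
      Typr [(q, Tag.I), (p, Tag.O)] (.guard (.inp q as P))
  | inp2 {x p : Name} {as : List Name} {P : Proc} :
      isOC x → isCN p → noCN as → Typr [(p, Tag.O)] P →
      Typr [] (.guard (.inp x (as ++ [p]) P))
  | rep2 {x p : Name} {as : List Name} {P : Proc} :
      isOC x → isCN p → noCN as → Typr [(p, Tag.O)] P →
      Typr [] (.rep x (as ++ [p]) P)
  | inp3 {u p : Name} {as : List Name} {P : Proc} :
      isIC u → isCN p → noCN as → Typr [(p, Tag.O)] P →
      Typr [(p, Tag.O)] (.guard (.inp u as P))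
  | nil : Typr [] (.guard .nil)
  | res1 {p : Name} {ξ σ' : Stack} {P : Proc} :
      isCN p → Typr (ξ ++ (p, Tag.O) :: (p, Tag.I) :: σ') P →
      Typr (ξ ++ σ') (.res p P)
  | res2 {p : Name} {σ : Stack} {P : Proc} :
      isCN p → (∀ t, (p, t) ∉ σ) → Typr σ P → Typr σ (.res p P)
  | res3 {a : Name} {σ : Stack} {P : Proc} :
      isPL a → Typr σ P → Typr σ (.res a P)
  | mat {a b : Name} {G : Guard} :
      isPL a → isPL b → Typr [] (.guard G) → Typr [] (.guard (.mat a b G))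
  | par {σ σ1 σ2 : Stack} {P Q : Proc} :
      Typr σ1 P → Typr σ2 Q → Interleave σ σ1 σ2 → Typr σ (.par P Q)
  | tauT {σ : Stack} {P : Proc} :
      Typr σ P → σ.length ≤ 1 → Typr σ (.guard (.tau P))
  | sum {σ : Stack} {G1 G2 : Guard} :
      Typr σ (.guard G1) → Typr σ (.guard G2) → σ.length ≤ 1 →
      Typr σ (.guard (.sum G1 G2))

/-- Forgetting the well-bracketing information of a stack. -/
def seqF : Stack → ℕ
  | (_, Tag.O) :: _ => 1
  | _ => 0

/-- wb-type-allowed transitions ⊢σ P --μ--> P'. -/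
def TyprT (σ : Stack) (P : Proc) (μ : Act) (P' : Proc) : Prop :=
  Typr σ P ∧ TAT (seqF σ) P μ P' ∧
  ∀ p, isCN p → p ∈ Act.fn μ → (∃ t, (p, t) ∈ σ) →
    ∃ t σ', σ = (p, t) :: σ' ∧ ((∃ t', (p, t') ∈ σ') → Act.subj μ ≠ some p)

/-- Evolution of the stack along an action. -/
def stackNext (σ : Stack) (μ : Act) (P' : Proc) (σ' : Stack) : Prop :=
  match μ with
  | .tau =>
      match σ with
      | (p, Tag.O) :: (q, Tag.I) :: σ'' =>
          if p = q ∧ p ∉ Proc.fn P' then σ' = σ'' else σ' = σ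
      | _ => σ' = σ
  | .inp a bs =>
      if isCN a then σ = (a, Tag.I) :: σ'
      else
        match bs.getLast? with
        | some p => if isCN p then σ' = (p, Tag.O) :: σ else σ' = σ
        | none => σ' = σ
  | .out a cs bs =>
      if isCN a then σ = (a, Tag.O) :: σ'
      else
        match bs.getLast? with
        | some p =>
            if isCN p then
              (if p ∈ cs then σ' = (p, Tag.I) :: σ else σ = (p, Tag.O) :: σ')
            else σ' = σ
        | none => σ' = σ

/-- Transitions with stacks (σ,P) --μ--> (σ',P'). -/
def StackTrans (σ : Stack) (P : Proc) (μ : Act) (σ' : Stack) (P' : Proc) : Prop :=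
  TyprT σ P μ P' ∧ stackNext σ μ P' σ'

/-- A clean process: typable with a clean stack. -/
def CleanP (P : Proc) : Prop := ∃ σ, CleanS σ ∧ Typr σ P

/-! ### Discreet processes -/

/- `Proc.avoids p P`: p does not appear as the object of an output in P
    (outside the scope of a rebinding of p). -/
mutual
def Proc.avoids (p : Name) : Proc → Prop
  | .out _ bs => p ∉ bs
  | .rep _ bs P => p ∈ bs ∨ Proc.avoids p P
  | .par P Q => Proc.avoids p P ∧ Proc.avoids p Q
  | .res a P => a = p ∨ Proc.avoids p P
  | .guard G => Guard.avoids p G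
def Guard.avoids (p : Name) : Guard → Prop
  | .nil => True
  | .inp _ bs P => p ∈ bs ∨ Proc.avoids p P
  | .tau P => Proc.avoids p P
  | .mat _ _ G => Guard.avoids p G
  | .sum G1 G2 => Guard.avoids p G1 ∧ Guard.avoids p G2
end

/- Every input subterm x(ã,q).Q at an output-controlled name keeps the
    received continuation name q out of output object position. -/
mutual
def Proc.inpOk : Proc → Prop
  | .out _ _ => True
  | .rep x bs P =>
      Proc.inpOk P ∧
      (isOC x → ∀ q, bs.getLast? = some q → isCN q → Proc.avoids q P)
  | .par P Q => Proc.inpOk P ∧ Proc.inpOk Q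
  | .res _ P => Proc.inpOk P
  | .guard G => Guard.inpOk G
def Guard.inpOk : Guard → Prop
  | .nil => True
  | .inp x bs P =>
      Proc.inpOk P ∧
      (isOC x → ∀ q, bs.getLast? = some q → isCN q → Proc.avoids q P)
  | .tau P => Proc.inpOk P
  | .mat _ _ G => Guard.inpOk G
  | .sum G1 G2 => Guard.inpOk G1 ∧ Guard.inpOk G2
end

/-- Discreet processes. -/
def DiscreetP (P : Proc) : Prop :=
  (∀ p ∈ Proc.fn P, isCN p → Proc.avoids p P) ∧ Proc.inpOk P

/-- Discreet stack transitions: continuation names in the object of μ are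
    not free in σ. -/
def DiscreetTrans (σ : Stack) (P : Proc) (μ : Act) (σ' : Stack) (P' : Proc) : Prop :=
  StackTrans σ P μ σ' P' ∧
  ∀ p, isCN p → p ∈ Act.objs μ → ∀ t, (p, t) ∉ σ

/-! ### Traces, questions and answers -/

/-- Questions: visible actions with a continuation name in object position. -/
def Act.isQuestion (μ : Act) : Prop := μ ≠ .tau ∧ ∃ p ∈ Act.objs μ, isCN p

/-- Answers: visible actions whose subject is a continuation name. -/
def Act.isAnswer (μ : Act) : Prop := ∃ p, Act.subj μ = some p ∧ isCN p

/-- A trace of length n for a discreet and clean process P0 and stack σ0. -/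
structure IsTrace (P0 : Proc) (σ0 : Stack) (n : ℕ)
    (μ : ℕ → Act) (σ : ℕ → Stack) (Pr : ℕ → Proc) : Prop where
  discreet0 : DiscreetP P0
  clean0 : CleanS σ0
  initP : Pr 0 = P0
  initS : σ 0 = σ0
  steps : ∀ j < n, DiscreetTrans (σ j) (Pr j) (μ j) (σ (j + 1)) (Pr (j + 1))
  fresh : ∀ j < n, ∀ p, isCN p → p ∈ Act.objs (μ j) → ∀ i < j, p ∉ Act.names (μ i)

/-- The matching relation μi ↷ μj between questions and answers
    (0-based indices). -/
def Matches (μ : ℕ → Act) (i j : ℕ) : Prop :=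
  i < j ∧
  ((∃ a cs bs p as', isCN p ∧ μ i = .out a cs (bs ++ [p]) ∧ p ∈ cs ∧
      μ j = .inp p as') ∨
   (∃ a bs p cs as', isCN p ∧ μ i = .inp a (bs ++ [p]) ∧
      μ j = .out p cs as'))

/-! ### wb-bisimilarity -/

def IsWbBisim (R : Stack → Proc → Proc → Prop) : Prop :=
  (∀ σ P Q, R σ P Q → Typr σ P ∧ Typr σ Q ∧ DiscreetP P ∧ DiscreetP Q) ∧
  (∀ σ P Q, R σ P Q → R σ Q P) ∧
  (∀ σ P Q, R σ P Q → ∀ μ σ' P', DiscreetTrans σ P μ σ' P' →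
    (∃ Q', WeakHat μ Q Q' ∧ R σ' P' Q') ∨
    (∃ x bs p, isOC x ∧ isCN p ∧ μ = .inp x (bs ++ [p]) ∧
      ∃ q cs Q', isCN q ∧ q ≠ x ∧ q ≠ p ∧ q ∉ bs ∧ q ∉ Proc.fn Q ∧ noCN cs ∧
        WeakTau (Proc.par Q
          (.res q (.par (.out x (bs ++ [q]))
            (.guard (.inp q cs (.out p cs)))))) Q' ∧
        R σ' P' Q') ∨
    (∃ u bs, isIC u ∧ μ = .inp u bs ∧
      ∃ Q', WeakTau (Proc.par Q (.out u bs)) Q' ∧ R σ' P' Q'))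

/-- wb-bisimilarity at σ: P ≈wb^σ Q. -/
def WbBisim (σ : Stack) (P Q : Proc) : Prop := ∃ R, IsWbBisim R ∧ R σ P Q

/-! ### Barbed equivalence and congruence for well-bracketing -/

/-- Observability at a (clean) stack σ, via seqF. -/
def WBarb (σ : Stack) (P : Proc) (a : Name) : Prop := Barb (seqF σ) P a

def IsWBarbedBisim (σ : Stack) (R : Proc → Proc → Prop) : Prop :=
  (∀ P Q, R P Q → R Q P) ∧
  (∀ P Q, R P Q → Typr σ P ∧ Typr σ Q) ∧
  (∀ P Q, R P Q → ∀ P', Step P P' → ∃ Q', WeakTau Q Q' ∧ R P' Q') ∧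
  (∀ P Q, R P Q → ∀ a, WBarb σ P a → WBarb σ Q a)

/-- Barbed σ-bisimilarity. -/
def WBarbBisim (σ : Stack) (P Q : Proc) : Prop := ∃ R, IsWBarbedBisim σ R ∧ R P Q

/-- Typing of one-hole contexts: `CTypr σh σ C` means C is a (σ/σh)
    context (its hole being given type σh). -/
inductive CTypr (σh : Stack) : Stack → Ctx → Prop
  | hole : CTypr σh σh .hole
  | rep2 {x p : Name} {as : List Name} {C : Ctx} :
      isOC x → isCN p → noCN as → CTypr σh [(p, Tag.O)] C →
      CTypr σh [] (.repC x (as ++ [p]) C)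
  | parL {σ σ1 σ2 : Stack} {C : Ctx} {Q : Proc} :
      CTypr σh σ1 C → Typr σ2 Q → Interleave σ σ1 σ2 →
      CTypr σh σ (.parL C Q)
  | parR {σ σ1 σ2 : Stack} {P : Proc} {C : Ctx} :
      Typr σ1 P → CTypr σh σ2 C → Interleave σ σ1 σ2 →
      CTypr σh σ (.parR P C)
  | res1 {p : Name} {ξ σ' : Stack} {C : Ctx} :
      isCN p → CTypr σh (ξ ++ (p, Tag.O) :: (p, Tag.I) :: σ') C →
      CTypr σh (ξ ++ σ') (.resC p C)
  | res2 {p : Name} {σ : Stack} {C : Ctx} :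
      isCN p → (∀ t, (p, t) ∉ σ) → CTypr σh σ C → CTypr σh σ (.resC p C)
  | res3 {a : Name} {σ : Stack} {C : Ctx} :
      isPL a → CTypr σh σ C → CTypr σh σ (.resC a C)
  | ginp1 {q p : Name} {as : List Name} {C : Ctx} :
      isCN q → isCN p → p ≠ q → noCN as → CTypr σh [(p, Tag.O)] C →
      CTypr σh [(q, Tag.I), (p, Tag.O)] (.guardC (.inpC q as C))
  | ginp2 {x p : Name} {as : List Name} {C : Ctx} :
      isOC x → isCN p → noCN as → CTypr σh [(p, Tag.O)] C →
      CTypr σh [] (.guardC (.inpC x (as ++ [p]) C))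
  | ginp3 {u p : Name} {as : List Name} {C : Ctx} :
      isIC u → isCN p → noCN as → CTypr σh [(p, Tag.O)] C →
      CTypr σh [(p, Tag.O)] (.guardC (.inpC u as C))
  | gtau {σ : Stack} {C : Ctx} :
      CTypr σh σ C → σ.length ≤ 1 → CTypr σh σ (.guardC (.tauC C))
  | gmat {a b : Name} {Gc : GCtx} :
      isPL a → isPL b → CTypr σh [] (.guardC Gc) →
      CTypr σh [] (.guardC (.matC a b Gc))
  | gsumL {σ : Stack} {Gc : GCtx} {G : Guard} :
      CTypr σh σ (.guardC Gc) → Typr σ (.guard G) → σ.length ≤ 1 →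
      CTypr σh σ (.guardC (.sumL Gc G))
  | gsumR {σ : Stack} {G : Guard} {Gc : GCtx} :
      Typr σ (.guard G) → CTypr σh σ (.guardC Gc) → σ.length ≤ 1 →
      CTypr σh σ (.guardC (.sumR G Gc))

/-- The static context (νã)(R | [·]). -/
def staticCtx (as : List Name) (R : Proc) : Ctx :=
  as.foldr Ctx.resC (Ctx.parR R Ctx.hole)

/-- Barbed equivalence at σ (testing with clean static contexts). -/
def WBarbedEq (σ : Stack) (P Q : Proc) : Prop :=
  Typr σ P ∧ Typr σ Q ∧
  ∀ (σ' : Stack) (as : List Name) (R : Proc),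
    CleanS σ' → CTypr σ σ' (staticCtx as R) →
    WBarbBisim σ' (Ctx.fill (staticCtx as R) P) (Ctx.fill (staticCtx as R) Q)

/-- Barbed congruence at σ (testing with all clean contexts). -/
def WBarbedCong (σ : Stack) (P Q : Proc) : Prop :=
  Typr σ P ∧ Typr σ Q ∧
  ∀ (σ' : Stack) (C : Ctx),
    CleanS σ' → CTypr σ σ' C →
    WBarbBisim σ' (Ctx.fill C P) (Ctx.fill C Q)

end PiCalc

namespace PiCalc

mutual
def Proc.psize : Proc → ℕ
  | .out _ _ => 1
  | .rep _ _ P => Proc.psize P + 1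
  | .par P Q => Proc.psize P + Proc.psize Q + 1
  | .res _ P => Proc.psize P + 1
  | .guard G => Guard.gsize G + 1
def Guard.gsize : Guard → ℕ
  | .nil => 0
  | .inp _ _ P => Proc.psize P + 1
  | .tau P => Proc.psize P + 1
  | .mat _ _ G => Guard.gsize G + 1
  | .sum G1 G2 => Guard.gsize G1 + Guard.gsize G2 + 1
end

lemma not_IC_and_OCt {a : Name} (h1 : isIC a = true) (h2 : isOCt a = true) : False := by
  unfold isIC isOCt isOC isCN at *
  cases kind a <;> simp_all

lemma key {P : Proc} {μ : Act} {f : Bool} {P' : Proc} (t : Trans P μ f P') :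
    ∀ η, η = 0 → SeqTyped η P →
    ((∀ a cs bs, μ = .out a cs bs → isIC a = true) ∧
     (∀ a bs, μ = .inp a bs → isOCt a = true) ∧
     (μ = .tau → SeqTyped 0 P' ∧ Proc.psize P' < Proc.psize P)) := by
  induction t with
  | out a bs =>
      intro η hη h
      cases h with
      | outOC hx => omega
      | outIC hic =>
          refine ⟨?_, ?_, ?_⟩
          · intro a' cs' bs' heq; cases heq; exact hic
          · intro _ _ heq; cases heq
          · intro heq; cases heq
  | inp a xs bs P h =>
      intro η hη ht
      cases ht with
      | inpIC _ _ => omega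
      | inpOC hx _ =>
          refine ⟨?_, ?_, ?_⟩
          · intro _ _ _ heq; cases heq
          · intro a' bs' heq; cases heq; exact hx
          · intro heq; cases heq
  | rep a xs bs P h =>
      intro η hη ht
      cases ht with
      | repOC hx _ =>
          refine ⟨?_, ?_, ?_⟩
          · intro _ _ _ heq; cases heq
          · intro a' bs' heq; cases heq; exact hx
          · intro heq; cases heq
  | tauPre P =>
      intro η hη ht
      cases ht with
      | tauT hp =>
          subst hη
          refine ⟨?_, ?_, ?_⟩
          · intro _ _ _ heq; cases heq
          · intro _ _ heq; cases heq
          · intro _; exact ⟨hp, by simp [Proc.psize, Guard.gsize]⟩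
  | sumL G1 G2 μ f P' _ ih =>
      intro η hη ht
      cases ht with
      | sum h1 h2 =>
          obtain ⟨k1, k2, k3⟩ := ih η hη h1
          refine ⟨k1, k2, ?_⟩
          intro heq
          obtain ⟨hp, hs⟩ := k3 heq
          exact ⟨hp, by simp [Proc.psize, Guard.gsize] at hs ⊢; omega⟩
  | sumR G1 G2 μ f P' _ ih =>
      intro η hη ht
      cases ht with
      | sum h1 h2 =>
          obtain ⟨k1, k2, k3⟩ := ih η hη h2
          refine ⟨k1, k2, ?_⟩
          intro heq
          obtain ⟨hp, hs⟩ := k3 heq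
          exact ⟨hp, by simp [Proc.psize, Guard.gsize] at hs ⊢; omega⟩
  | mat a G μ f P' _ ih =>
      intro η hη ht
      cases ht with
      | mat h1 =>
          obtain ⟨k1, k2, k3⟩ := ih 0 rfl h1
          refine ⟨k1, k2, ?_⟩
          intro heq
          obtain ⟨hp, hs⟩ := k3 heq
          exact ⟨hp, by simp [Proc.psize, Guard.gsize] at hs ⊢; omega⟩
  | parL P Q P' μ f _ _ ih =>
      intro η hη ht
      cases ht with
      | par h1 h2 hle =>
          rename_i η1 η2
          obtain ⟨k1, k2, k3⟩ := ih η1 (by omega) h1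
          refine ⟨k1, k2, ?_⟩
          intro heq
          obtain ⟨hp, hs⟩ := k3 heq
          have e2 : η2 = 0 := by omega
          subst e2
          exact ⟨SeqTyped.par hp h2 (by omega), by
            simp [Proc.psize] at hs ⊢; omega⟩
  | parR P Q Q' μ f _ _ ih =>
      intro η hη ht
      cases ht with
      | par h1 h2 hle =>
          rename_i η1 η2
          obtain ⟨k1, k2, k3⟩ := ih η2 (by omega) h2
          refine ⟨k1, k2, ?_⟩
          intro heq
          obtain ⟨hp, hs⟩ := k3 heq
          have e1 : η1 = 0 := by omega
          subst e1
          exact ⟨SeqTyped.par h1 hp (by omega), by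
            simp [Proc.psize] at hs ⊢; omega⟩
  | commL P Q P' Q' a cs bs f1 f2 _ _ _ ih1 ih2 =>
      intro η hη ht
      cases ht with
      | par h1 h2 hle =>
          rename_i η1 η2
          obtain ⟨k1, _, _⟩ := ih1 η1 (by omega) h1
          obtain ⟨_, k2, _⟩ := ih2 η2 (by omega) h2
          exact (not_IC_and_OCt (k1 a cs bs rfl) (k2 a bs rfl)).elim
  | commR P Q P' Q' a cs bs f1 f2 _ _ _ ih1 ih2 =>
      intro η hη ht
      cases ht with
      | par h1 h2 hle =>
          rename_i η1 η2
          obtain ⟨_, k2, _⟩ := ih1 η1 (by omega) h1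
          obtain ⟨k1, _, _⟩ := ih2 η2 (by omega) h2
          exact (not_IC_and_OCt (k1 a cs bs rfl) (k2 a bs rfl)).elim
  | resI a P P' μ f _ _ ih =>
      intro η hη ht
      cases ht with
      | res hp =>
          obtain ⟨k1, k2, k3⟩ := ih η hη hp
          refine ⟨k1, k2, ?_⟩
          intro heq
          obtain ⟨hp', hs⟩ := k3 heq
          exact ⟨SeqTyped.res hp', by simp [Proc.psize] at hs ⊢; omega⟩
  | openO a x cs bs P P' f _ _ _ _ ih =>
      intro η hη ht
      cases ht with
      | res hp =>
          obtain ⟨k1, _, _⟩ := ih η hη hp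
          refine ⟨?_, ?_, ?_⟩
          · intro a' cs' bs' heq
            cases heq
            exact k1 x cs bs rfl
          · intro _ _ heq; cases heq
          · intro heq; cases heq

lemma step_decreases {P P' : Proc} (h : SeqTyped 0 P) (s : Step P P') :
    SeqTyped 0 P' ∧ Proc.psize P' < Proc.psize P := by
  obtain ⟨f, t⟩ := s
  exact (key t 0 rfl h).2.2 rfl

end PiCalc

namespace PiCalc

/-- an inactive process is not divergent. -/
theorem inactive_not_divergent (P : Proc) (h : SeqTyped 0 P) :
    ¬ ∃ f : ℕ → Proc, f 0 = P ∧ ∀ n, Step (f n) (f (n + 1)) := by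
  rintro ⟨f, hf0, hstep⟩
  have typed : ∀ n, SeqTyped 0 (f n) := by
    intro n
    induction n with
    | zero => rw [hf0]; exact h
    | succ k ih => exact (step_decreases ih (hstep k)).1
  have mono : ∀ n, Proc.psize (f n) + n ≤ Proc.psize (f 0) := by
    intro n
    induction n with
    | zero => omega
    | succ k ih =>
      have := (step_decreases (typed k) (hstep k)).2
      omega
  have := mono (Proc.psize (f 0) + 1)
  omega

end PiCalc
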